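/- arXiv:1611.00801 — 5 statements merged into one kernel-verified Lean document; each statement's English description precedes it below -/
import Mathlib

section
/- Let α be a real number with 0 < α ≤ 1/2. The map sending each finite set S of natural numbers to the real number Σ_{i ∈ S} α^i is injective; that is, if S and S' are finite subsets of ℕ with Σ_{i ∈ S} α^i = Σ_{i ∈ S'} α^i, then S = S'. -/
private lemma fofe_tail_lt (α : ℝ) (hα0 : 0 < α) (hα : α ≤ 1 / 2) (m : ℕ)
    (S : Finset ℕ) (hS : ∀ i ∈ S, m < i) : ∑ i ∈ S, α ^ i < α ^ m := by
  have hα1 : α < 1 := by linarith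
  set B := S.sup id + m + 2 with hB
  have hsub : S ⊆ Finset.Ico (m + 1) B := by
    intro i hi
    simp only [Finset.mem_Ico]
    refine ⟨hS i hi, ?_⟩
    have := Finset.le_sup (f := id) hi
    simp only [id] at this
    omega
  have h1 : ∑ i ∈ S, α ^ i ≤ ∑ i ∈ Finset.Ico (m + 1) B, α ^ i :=
    Finset.sum_le_sum_of_subset_of_nonneg hsub (fun i _ _ => by positivity)
  set k := B - (m + 1) with hk
  have h2 : ∑ i ∈ Finset.Ico (m + 1) B, α ^ i
      = α ^ (m + 1) * ∑ i ∈ Finset.range k, α ^ i := by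
    rw [Finset.sum_Ico_eq_sum_range, Finset.mul_sum]
    exact Finset.sum_congr rfl (fun i _ => by rw [← pow_add])
  have h3 : ∑ i ∈ Finset.range k, α ^ i = (α ^ k - 1) / (α - 1) :=
    geom_sum_eq (by linarith) _
  have heq : (α ^ k - 1) / (α - 1) = (1 - α ^ k) / (1 - α) := by
    rw [← neg_div_neg_eq]; ring_nf
  have hpm : 0 < α ^ m := pow_pos hα0 m
  have hpk : 0 < α ^ k := pow_pos hα0 k
  have h4 : α ^ (m + 1) * ((1 - α ^ k) / (1 - α)) < α ^ m := by
    rw [mul_div_assoc', div_lt_iff₀ (by linarith : (0:ℝ) < 1 - α)]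
    have hm1 : α ^ (m + 1) = α * α ^ m := by ring
    nlinarith [mul_pos (mul_pos hα0 hpm) hpk]
  calc ∑ i ∈ S, α ^ i ≤ ∑ i ∈ Finset.Ico (m + 1) B, α ^ i := h1
    _ = α ^ (m + 1) * ((1 - α ^ k) / (1 - α)) := by rw [h2, h3, heq]
    _ < α ^ m := h4

private lemma fofe_key (α : ℝ) (hα0 : 0 < α) (hα : α ≤ 1 / 2)
    (S S' : Finset ℕ) (hsum : ∑ i ∈ S, α ^ i = ∑ i ∈ S', α ^ i)
    (m : ℕ) (hlow : ∀ i < m, (i ∈ S ↔ i ∈ S'))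
    (hmS : m ∈ S) (hmS' : m ∉ S') : False := by
  have hsplit : ∀ T : Finset ℕ, ∑ i ∈ T, α ^ i
      = ∑ i ∈ T.filter (· < m), α ^ i + ∑ i ∈ T.filter (fun i => ¬ i < m), α ^ i :=
    fun T => (Finset.sum_filter_add_sum_filter_not T _ _).symm
  have hfeq : S.filter (· < m) = S'.filter (· < m) := by
    ext i
    simp only [Finset.mem_filter]
    constructor
    · rintro ⟨h1, h2⟩; exact ⟨(hlow i h2).mp h1, h2⟩
    · rintro ⟨h1, h2⟩; exact ⟨(hlow i h2).mpr h1, h2⟩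
  have htail : ∑ i ∈ S.filter (fun i => ¬ i < m), α ^ i
      = ∑ i ∈ S'.filter (fun i => ¬ i < m), α ^ i := by
    have := hsum
    rw [hsplit S, hsplit S', hfeq] at this
    linarith
  have hlb : α ^ m ≤ ∑ i ∈ S.filter (fun i => ¬ i < m), α ^ i := by
    refine Finset.single_le_sum (f := fun i => α ^ i) (fun i _ => by positivity) ?_
    simp [Finset.mem_filter, hmS]
  have hub : ∑ i ∈ S'.filter (fun i => ¬ i < m), α ^ i < α ^ m := by
    refine fofe_tail_lt α hα0 hα m _ ?_
    intro i hi
    simp only [Finset.mem_filter] at hi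
    rcases hi with ⟨hi1, hi2⟩
    have : i ≠ m := fun h => hmS' (h ▸ hi1)
    omega
  linarith

theorem fofe_subset_sum_injective (α : ℝ) (hα0 : 0 < α) (hα : α ≤ 1 / 2) :
    Function.Injective (fun S : Finset ℕ => ∑ i ∈ S, α ^ i) := by
  intro S S' h
  simp only at h
  by_contra hne
  have hex : ∃ n, ¬(n ∈ S ↔ n ∈ S') := by
    by_contra hc
    push_neg at hc
    exact hne (Finset.ext hc)
  classical
  set m := Nat.find hex with hm
  have hspec : ¬(m ∈ S ↔ m ∈ S') := Nat.find_spec hex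
  have hlow : ∀ i < m, (i ∈ S ↔ i ∈ S') := fun i hi =>
    not_not.mp (Nat.find_min hex hi)
  by_cases hmS : m ∈ S
  · have hmS' : m ∉ S' := fun h' => hspec ⟨fun _ => h', fun _ => hmS⟩
    exact fofe_key α hα0 hα S S' h m hlow hmS hmS'
  · have hmS' : m ∈ S' := by tauto
    exact fofe_key α hα0 hα S' S h.symm m (fun i hi => (hlow i hi).symm) hmS' hmS
end

section
/- Let V be any type (the vocabulary), T a natural number, and α a real number with 0 < α ≤ 1/2. Define the FOFE code of a sequence w : Fin T → V to be the function z : V → ℝ given by z(v) = Σ_{t=0}^{T−1} α^{T−1−t} · [w(t) = v], where [w(t) = v] is 1 if w(t) = v and 0 otherwise. Then the map sending w to its FOFE code is injective: two sequences of length T with the same FOFE code are equal. -/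
open scoped Classical

/-- The FOFE code of a sequence `w : Fin T → V` with forgetting factor `α`:
`z v = ∑ t, α ^ (T - 1 - t) * [w t = v]`. -/
noncomputable def fofeFin {V : Type*} (α : ℝ) {T : ℕ} (w : Fin T → V) : V → ℝ :=
  fun v => ∑ t : Fin T, α ^ (T - 1 - (t : ℕ)) * (if w t = v then (1 : ℝ) else 0)

lemma fofe_geom_aux (α : ℝ) (hα0 : 0 < α) (hα : α ≤ 1 / 2) (n : ℕ) :
    ∑ k ∈ Finset.range n, α ^ (k + 1) ≤ 1 - α ^ n := by
  induction n with
  | zero => simp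
  | succ n ih =>
    rw [Finset.sum_range_succ]
    have h1 : (0:ℝ) < α ^ n := pow_pos hα0 n
    nlinarith [h1, ih, pow_succ α n]

theorem fofeFin_injective {V : Type*} (T : ℕ) (α : ℝ) (hα0 : 0 < α) (hα : α ≤ 1 / 2) :
    Function.Injective (fun w : Fin T → V => fofeFin α w) := by
  intro w₁ w₂ h
  by_contra hne
  have hT : ∃ t : Fin T, w₁ t ≠ w₂ t := by
    by_contra hc; push_neg at hc; exact hne (funext hc)
  set S := Finset.univ.filter (fun t : Fin T => w₁ t ≠ w₂ t) with hS
  have hSne : S.Nonempty := by obtain ⟨t, ht⟩ := hT; exact ⟨t, by simp [hS, ht]⟩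
  set t := S.max' hSne with htdef
  have htmem : w₁ t ≠ w₂ t := by
    have := S.max'_mem hSne; simpa [hS] using this
  have hmax : ∀ s : Fin T, t < s → w₁ s = w₂ s := by
    intro s hs
    by_contra hcs
    exact absurd (S.le_max' s (by simp [hS, hcs])) (not_le.mpr hs)
  set v := w₁ t with hv
  have hz : fofeFin α w₁ v = fofeFin α w₂ v := congrFun h v
  -- the difference function
  set d : Fin T → ℝ := fun s =>
    α ^ (T - 1 - (s : ℕ)) *
      ((if w₁ s = v then (1:ℝ) else 0) - (if w₂ s = v then (1:ℝ) else 0)) with hd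
  have hsum0 : ∑ s : Fin T, d s = 0 := by
    have : (∑ s : Fin T, α ^ (T - 1 - (s : ℕ)) * (if w₁ s = v then (1:ℝ) else 0))
        - (∑ s : Fin T, α ^ (T - 1 - (s : ℕ)) * (if w₂ s = v then (1:ℝ) else 0)) = 0 := by
      have := hz
      simp only [fofeFin] at this
      linarith [this]
    rw [← Finset.sum_sub_distrib] at this
    simpa [hd, mul_sub] using this
  -- value at t
  have hdt : d t = α ^ (T - 1 - (t : ℕ)) := by
    have h1 : w₁ t = v := rfl
    have h2 : w₂ t ≠ v := fun hc => htmem (h1.trans hc.symm)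
    simp [hd, h1, h2]
  -- split off t
  have hsplit : ∑ s : Fin T, d s = d t + ∑ s ∈ Finset.univ.erase t, d s := by
    rw [Finset.add_sum_erase _ _ (Finset.mem_univ t)]
  -- lower bound for the rest
  set g : ℕ → ℝ := fun k => if k < (t : ℕ) then -α ^ (T - 1 - k) else 0 with hg
  have hbound : ∀ s ∈ Finset.univ.erase t, g (s : ℕ) ≤ d s := by
    intro s hs
    have hst : s ≠ t := (Finset.mem_erase.mp hs).1
    rcases lt_trichotomy s t with hlt | heq | hgt
    · have hlt' : (s : ℕ) < (t : ℕ) := hlt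
      simp only [hg, hd, if_pos hlt']
      have hpow : (0:ℝ) < α ^ (T - 1 - (s : ℕ)) := pow_pos hα0 _
      have : ((if w₁ s = v then (1:ℝ) else 0) - (if w₂ s = v then (1:ℝ) else 0)) ≥ -1 := by
        split_ifs <;> norm_num
      nlinarith
    · exact absurd heq hst
    · have he : w₁ s = w₂ s := hmax s hgt
      have hlt' : ¬ ((s : ℕ) < (t : ℕ)) := not_lt.mpr (le_of_lt hgt)
      simp [hg, hd, he, if_neg hlt']
  have hrest : ∑ s ∈ Finset.univ.erase t, g (s : ℕ) ≤ ∑ s ∈ Finset.univ.erase t, d s :=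
    Finset.sum_le_sum hbound
  -- compute the g-sum
  have hgt0 : g (t : ℕ) = 0 := by simp [hg]
  have hgsum : ∑ s ∈ Finset.univ.erase t, g (s : ℕ) = ∑ s : Fin T, g (s : ℕ) := by
    rw [← Finset.add_sum_erase _ (fun s : Fin T => g (s : ℕ)) (Finset.mem_univ t), hgt0,
      zero_add]
  have hgsum2 : ∑ s : Fin T, g (s : ℕ) = ∑ k ∈ Finset.range T, g k :=
    Fin.sum_univ_eq_sum_range (fun k => g k) T
  have hgsum3 : ∑ k ∈ Finset.range T, g k = -∑ k ∈ Finset.range (t : ℕ), α ^ (T - 1 - k) := by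
    have htT : (t : ℕ) < T := t.isLt
    have hz0 : ∀ k ∈ Finset.range T, k ∉ Finset.range (t : ℕ) → g k = 0 := by
      intro k _ hk
      have : ¬ (k < (t : ℕ)) := fun hc => hk (Finset.mem_range.mpr hc)
      simp [hg, this]
    rw [← Finset.sum_subset (Finset.range_subset_range.mpr (le_of_lt htT)) hz0]
    rw [← Finset.sum_neg_distrib]
    apply Finset.sum_congr rfl
    intro k hk
    have : k < (t : ℕ) := Finset.mem_range.mp hk
    simp [hg, this]
  -- bound the geometric sum
  have hkey : ∑ k ∈ Finset.range (t : ℕ), α ^ (T - 1 - k) < α ^ (T - 1 - (t : ℕ)) := by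
    have htT : (t : ℕ) < T := t.isLt
    have hre : ∀ k ∈ Finset.range (t : ℕ),
        α ^ (T - 1 - k) = α ^ (T - 1 - (t : ℕ)) * α ^ ((t : ℕ) - k) := by
      intro k hk
      have hk' : k < (t : ℕ) := Finset.mem_range.mp hk
      rw [← pow_add]
      congr 1
      omega
    rw [Finset.sum_congr rfl hre, ← Finset.mul_sum]
    have hsum : ∑ k ∈ Finset.range (t : ℕ), α ^ ((t : ℕ) - k)
        = ∑ k ∈ Finset.range (t : ℕ), α ^ (k + 1) := by
      rw [← Finset.sum_range_reflect]
      apply Finset.sum_congr rfl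
      intro k hk
      have : k < (t : ℕ) := Finset.mem_range.mp hk
      congr 1
      omega
    rw [hsum]
    have h1 : ∑ k ∈ Finset.range (t : ℕ), α ^ (k + 1) ≤ 1 - α ^ (t : ℕ) :=
      fofe_geom_aux α hα0 hα (t : ℕ)
    have h2 : (0:ℝ) < α ^ (t : ℕ) := pow_pos hα0 _
    have h3 : (0:ℝ) < α ^ (T - 1 - (t : ℕ)) := pow_pos hα0 _
    nlinarith
  -- put it all together
  have : (0:ℝ) < d t + ∑ s ∈ Finset.univ.erase t, d s := by
    have : -α ^ (T - 1 - (t : ℕ)) < ∑ s ∈ Finset.univ.erase t, d s := by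
      calc -α ^ (T - 1 - (t : ℕ)) < -∑ k ∈ Finset.range (t : ℕ), α ^ (T - 1 - k) := by
            linarith [hkey]
        _ = ∑ s ∈ Finset.univ.erase t, g (s : ℕ) := by rw [hgsum, hgsum2, hgsum3]
        _ ≤ ∑ s ∈ Finset.univ.erase t, d s := hrest
    rw [hdt]
    linarith
  rw [← hsplit, hsum0] at this
  exact lt_irrefl 0 this
end

section
/- Let V be any type (the vocabulary) and α a real number with 0 < α ≤ 1/2. Define the FOFE code of a list w over V recursively by fofe(α, []) = 0 (the zero function V → ℝ) and fofe(α, ws ++ [w]) = α · fofe(α, ws) + e_w, where e_w : V → ℝ is the indicator (one-hot) function of w. Then the map fofe(α, ·) : List V → (V → ℝ) is injective: any two lists (possibly of different lengths) with the same FOFE code are equal. -/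
open scoped Classical

/-- The FOFE code of a list `w` over `V` with forgetting factor `α`, defined
recursively (reading the list left to right) by `z₀ = 0` and
`z_t = α • z_{t-1} + e_{w_t}`.  It satisfies `fofe α [] = 0` and
`fofe α (ws ++ [w]) = α • fofe α ws + e_w`. -/
noncomputable def fofe {V : Type*} (α : ℝ) (ws : List V) : V → ℝ :=
  ws.foldl (fun z w => fun v => α * z v + (if w = v then (1 : ℝ) else 0)) 0

/-- FOFE read from the right end: `Frev α (w :: t) v = e_w v + α * Frev α t v`. -/
noncomputable def Frev {V : Type*} (α : ℝ) : List V → V → ℝ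
  | [] => 0
  | w :: t => fun v => (if w = v then (1 : ℝ) else 0) + α * Frev α t v

lemma Frev_nonneg {V : Type*} (α : ℝ) (hα0 : 0 < α) (t : List V) (v : V) :
    0 ≤ Frev α t v := by
  induction t with
  | nil => simp [Frev]
  | cons w t ih =>
    simp only [Frev]
    have h1 : (0:ℝ) ≤ if w = v then (1:ℝ) else 0 := by split <;> norm_num
    exact add_nonneg h1 (mul_nonneg hα0.le ih)

lemma Frev_bound {V : Type*} (α : ℝ) (hα0 : 0 < α) (hα : α ≤ 1 / 2) (t : List V) (v : V) :
    (1 - α) * Frev α t v ≤ 1 - α ^ t.length := by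
  induction t with
  | nil => simp [Frev]
  | cons w t ih =>
    simp only [Frev, List.length_cons]
    have h1 : (if w = v then (1:ℝ) else 0) ≤ 1 := by split <;> norm_num
    have h1' : (0:ℝ) ≤ if w = v then (1:ℝ) else 0 := by split <;> norm_num
    have hα1 : (1:ℝ) - α ≥ 0 := by linarith
    have h2 : α * ((1 - α) * Frev α t v) ≤ α * (1 - α ^ t.length) :=
      mul_le_mul_of_nonneg_left ih hα0.le
    have h3 : (1 - α) * (if w = v then (1:ℝ) else 0) ≤ (1 - α) * 1 :=
      mul_le_mul_of_nonneg_left h1 hα1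
    rw [pow_succ]
    nlinarith

lemma Frev_lt {V : Type*} (α : ℝ) (hα0 : 0 < α) (hα : α ≤ 1 / 2) (t : List V) (v : V) :
    α * Frev α t v < 1 := by
  have hb := Frev_bound α hα0 hα t v
  have hn := Frev_nonneg α hα0 t v
  have hp : (0:ℝ) < α ^ t.length := pow_pos hα0 _
  nlinarith

lemma Frev_inj {V : Type*} (α : ℝ) (hα0 : 0 < α) (hα : α ≤ 1 / 2) :
    ∀ s t : List V, Frev α s = Frev α t → s = t := by
  intro s
  induction s with
  | nil =>
    intro t h
    cases t with
    | nil => rfl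
    | cons b t =>
      exfalso
      have hb := congrFun h b
      simp only [Frev, if_pos rfl, Pi.zero_apply, if_true] at hb
      have hn := Frev_nonneg α hα0 t b
      nlinarith
  | cons a s ih =>
    intro t h
    cases t with
    | nil =>
      exfalso
      have ha := congrFun h a
      simp only [Frev, if_pos rfl, Pi.zero_apply, if_true] at ha
      have hn := Frev_nonneg α hα0 s a
      nlinarith
    | cons b t =>
      have hab : a = b := by
        by_contra hne
        have ha := congrFun h a
        simp only [Frev, if_pos rfl, if_neg (Ne.symm hne), if_true] at ha
        have h1 := Frev_nonneg α hα0 s a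
        have h2 := Frev_lt α hα0 hα t a
        nlinarith [mul_nonneg hα0.le h1]
      subst hab
      have hst : s = t := by
        apply ih
        funext v
        have hv := congrFun h v
        simp only [Frev] at hv
        have : α * Frev α s v = α * Frev α t v := by linarith
        exact mul_left_cancel₀ (ne_of_gt hα0) this
      rw [hst]

lemma Frev_append {V : Type*} (α : ℝ) (s : List V) (w : V) (v : V) :
    Frev α (s ++ [w]) v = Frev α s v + α ^ s.length * (if w = v then (1:ℝ) else 0) := by
  induction s with
  | nil => simp [Frev]
  | cons a s ih =>
    simp only [List.cons_append, Frev, List.length_cons, List.append_eq, ih]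
    ring

lemma fofe_eq_Frev_aux {V : Type*} (α : ℝ) :
    ∀ (ws : List V) (z : V → ℝ),
      ws.foldl (fun z w => fun v => α * z v + (if w = v then (1 : ℝ) else 0)) z
        = fun v => α ^ ws.length * z v + Frev α ws.reverse v := by
  intro ws
  induction ws with
  | nil => intro z; funext v; simp [Frev]
  | cons w ws ih =>
    intro z
    funext v
    simp only [List.foldl_cons, ih, List.reverse_cons, Frev_append,
      List.length_reverse, List.length_cons]
    ring

lemma fofe_eq_Frev {V : Type*} (α : ℝ) (ws : List V) :
    fofe α ws = Frev α ws.reverse := by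
  funext v
  simp [fofe, fofe_eq_Frev_aux α ws 0]

theorem fofe_injective {V : Type*} (α : ℝ) (hα0 : 0 < α) (hα : α ≤ 1 / 2) :
    Function.Injective (fun ws : List V => fofe α ws) := by
  intro s t h
  simp only [fofe_eq_Frev] at h
  have := Frev_inj α hα0 hα _ _ h
  exact List.reverse_injective this
end

section
/- Let V be any type (the vocabulary) and T a natural number. For a real number α and a sequence w : Fin T → V, define the FOFE code of w to be the function z : V → ℝ given by z(v) = Σ_{t=0}^{T−1} α^{T−1−t} · [w(t) = v]. Then the set of α in the open interval (1/2, 1) for which the map w ↦ FOFE code of w (on sequences of length exactly T) fails to be injective is a finite set. -/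
open scoped Classical

theorem fofeFin_noninjective_set_finite {V : Type*} (T : ℕ) :
    {α : ℝ | α ∈ Set.Ioo (1 / 2 : ℝ) 1 ∧
      ¬ Function.Injective (fun w : Fin T → V => fofeFin α w)}.Finite := by
  classical
  let Q : (Fin T → Bool) → (Fin T → Bool) → Polynomial ℝ := fun a b =>
    ∑ t : Fin T, Polynomial.C ((if a t then (1:ℝ) else 0) - (if b t then (1:ℝ) else 0)) *
      Polynomial.X ^ (T - 1 - (t : ℕ))
  have hexp : Function.Injective (fun t : Fin T => T - 1 - (t : ℕ)) := by
    intro t₁ t₂ h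
    have h1 : (t₁ : ℕ) ≤ T - 1 := Nat.le_pred_of_lt t₁.isLt
    have h2 : (t₂ : ℕ) ≤ T - 1 := Nat.le_pred_of_lt t₂.isLt
    have h' := congrArg (fun n => T - 1 - n) h
    simp only [Nat.sub_sub_self h1, Nat.sub_sub_self h2] at h'
    exact Fin.ext h'
  have hQne : ∀ a b : Fin T → Bool, a ≠ b → Q a b ≠ 0 := by
    intro a b hab hQ
    obtain ⟨t₀, ht₀⟩ := Function.ne_iff.mp hab
    have hc := congrArg (fun p => Polynomial.coeff p (T - 1 - (t₀ : ℕ))) hQ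
    simp only [Q, Polynomial.finset_sum_coeff, Polynomial.coeff_C_mul,
      Polynomial.coeff_X_pow, Polynomial.coeff_zero] at hc
    rw [Finset.sum_eq_single t₀] at hc
    · simp only [if_pos rfl, mul_one] at hc
      cases ha : a t₀ <;> cases hb : b t₀ <;> simp_all
    · intro t _ ht
      have hne : ¬ (T - 1 - (t₀ : ℕ) = T - 1 - (t : ℕ)) := fun h => ht (hexp h.symm)
      simp [hne]
    · simp
  have hsub : {α : ℝ | α ∈ Set.Ioo (1 / 2 : ℝ) 1 ∧
      ¬ Function.Injective (fun w : Fin T → V => fofeFin α w)} ⊆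
      ⋃ p ∈ {p : (Fin T → Bool) × (Fin T → Bool) | p.1 ≠ p.2},
        {α : ℝ | (Q p.1 p.2).IsRoot α} := by
    rintro α ⟨-, hninj⟩
    rw [Function.Injective] at hninj
    push_neg at hninj
    obtain ⟨w, w', heq, hne⟩ := hninj
    obtain ⟨t₀, ht₀⟩ := Function.ne_iff.mp hne
    set v := w t₀ with hv
    set a : Fin T → Bool := fun t => decide (w t = v) with ha
    set b : Fin T → Bool := fun t => decide (w' t = v) with hb
    have hab : a ≠ b := by
      intro h
      have := congrFun h t₀
      simp [ha, hb, hv] at this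
      exact ht₀ this.symm
    refine Set.mem_biUnion (show ((a, b) : (Fin T → Bool) × (Fin T → Bool)) ∈ _ from hab) ?_
    have hv' := congrFun heq v
    simp only [fofeFin] at hv'
    show (Q a b).IsRoot α
    simp only [Polynomial.IsRoot, Q, Polynomial.eval_finset_sum, Polynomial.eval_mul,
      Polynomial.eval_C, Polynomial.eval_pow, Polynomial.eval_X]
    have : ∀ t : Fin T,
        ((if a t then (1:ℝ) else 0) - (if b t then (1:ℝ) else 0)) * α ^ (T - 1 - (t : ℕ)) =
        α ^ (T - 1 - (t : ℕ)) * (if w t = v then (1:ℝ) else 0) -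
        α ^ (T - 1 - (t : ℕ)) * (if w' t = v then (1:ℝ) else 0) := by
      intro t
      simp only [ha, hb, decide_eq_true_eq]
      by_cases h1 : w t = v <;> by_cases h2 : w' t = v <;> simp [h1, h2]
    rw [Finset.sum_congr rfl (fun t _ => this t), Finset.sum_sub_distrib, hv', sub_self]
  exact Set.Finite.subset
    (Set.Finite.biUnion (Set.toFinite {p : (Fin T → Bool) × (Fin T → Bool) | p.1 ≠ p.2})
      (fun p hp => Polynomial.finite_setOf_isRoot (hQne p.1 p.2 hp))) hsub
end

section
/- Let V be any type (the vocabulary). For a real number α, define the FOFE code of a list w over V recursively by fofe(α, []) = 0 (the zero function V → ℝ) and fofe(α, ws ++ [w]) = α · fofe(α, ws) + e_w, where e_w : V → ℝ is the indicator (one-hot) function of w. Then the set of α in the open interval (1/2, 1) for which the map fofe(α, ·) : List V → (V → ℝ) fails to be injective is a countable set. -/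
open scoped Classical

/-- Polynomial version of FOFE, per coordinate. -/
noncomputable def pfofe {V : Type*} (ws : List V) (v : V) : Polynomial ℤ :=
  ws.foldl (fun z w => Polynomial.X * z + (if w = v then 1 else 0)) 0

lemma pfofe_concat {V : Type*} (ws : List V) (w v : V) :
    pfofe (ws ++ [w]) v = Polynomial.X * pfofe ws v + (if w = v then 1 else 0) := by
  simp [pfofe, List.foldl_append]

lemma fofe_eval {V : Type*} (α : ℝ) (ws : List V) (v : V) :
    fofe α ws v = Polynomial.aeval α (pfofe ws v) := by
  induction ws using List.reverseRecOn with
  | nil => simp [fofe, pfofe]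
  | append_singleton ws w ih =>
      have h : fofe α (ws ++ [w]) = fun v => α * fofe α ws v + (if w = v then (1:ℝ) else 0) := by
        simp [fofe, List.foldl_append]
      rw [h, pfofe_concat]
      simp [ih, apply_ite (Polynomial.aeval α)]

lemma pfofe_inj {V : Type*} (ws ws' : List V)
    (h : ∀ v, pfofe ws v = pfofe ws' v) : ws = ws' := by
  induction ws using List.reverseRecOn generalizing ws' with
  | nil =>
      induction ws' using List.reverseRecOn with
      | nil => rfl
      | append_singleton ws' w _ =>
          have := h w
        
          rw [pfofe_concat] at this
          have h0 := congrArg (Polynomial.eval 0) this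
          simp [pfofe] at h0
  | append_singleton ws w ih =>
      induction ws' using List.reverseRecOn with
      | nil =>
          have := h w
          rw [pfofe_concat] at this
          have h0 := congrArg (Polynomial.eval 0) this
          simp [pfofe] at h0
      | append_singleton ws' w' _ =>
          have key : ∀ v, Polynomial.X * pfofe ws v + (if w = v then 1 else 0)
              = Polynomial.X * pfofe ws' v + (if w' = v then 1 else 0) := by
            intro v; have := h v; rwa [pfofe_concat, pfofe_concat] at this
          have hww' : w = w' := by
            by_contra hne
            have := congrArg (Polynomial.eval 0) (key w)
            simp [if_neg (Ne.symm hne)] at this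
          subst hww'
          have htail : ws = ws' := by
            apply ih
            intro v
            exact mul_left_cancel₀ Polynomial.X_ne_zero (add_right_cancel (key v))
          rw [htail]

theorem fofe_noninjective_set_countable {V : Type*} :
    {α : ℝ | α ∈ Set.Ioo (1 / 2 : ℝ) 1 ∧
      ¬ Function.Injective (fun ws : List V => fofe α ws)}.Countable := by
  apply Set.Countable.mono _ (Algebraic.countable (R := ℤ) (A := ℝ))
  rintro α ⟨-, hinj⟩
  rw [Function.not_injective_iff] at hinj
  obtain ⟨ws, ws', heq, hne⟩ := hinj
  obtain ⟨v, hv⟩ : ∃ v, pfofe ws v ≠ pfofe ws' v := by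
    by_contra h
    push_neg at h
    exact hne (pfofe_inj ws ws' h)
  refine ⟨pfofe ws v - pfofe ws' v, sub_ne_zero.mpr hv, ?_⟩
  have := congrFun heq v
  simp only [fofe_eval] at this
  simp [this]
end
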